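/- In an L-embedded Banach space, every sequence spanning ℓ¹ almost isometrically admits a subsequence which spans ℓ¹ asymptotically isometrically. -/

import Mathlib

/-!
Let `ξ ∈ X''` be a weak* limit of `(xₙ)` along a nonprincipal ultrafilter and `P` the
L-projection onto `X`. Hahn–Banach functionals that follow prescribed signs on a tail of `(xₙ)`,
together with the almost isometric `ℓ¹`-estimates, force `‖ξ - Pξ‖ ≥ 1`; since `‖ξ‖ ≤ 1`, this
gives `Pξ = 0` and `‖ξ‖ = 1`. Then `‖w + tξ‖ = ‖w‖ + |t|` for every `w ∈ X`, and weak* lower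
semicontinuity of the norm yields `‖w + t xₙ‖ ≥ ‖w‖ + |t| - ε` for ultrafilter-many `n`.
Compactness in finite dimensions makes this uniform over the span of finitely many earlier
terms, so the terms of the subsequence can be chosen one at a time with
`(1 - δⱼ) (‖w‖ + |t|) ≤ (1 - δⱼ₊₁) ‖w + t x_{kⱼ}‖`, which telescopes to the asymptotic estimate.
-/

open NormedSpace Filter Topology

/-- A sequence spans `ℓ¹` asymptotically isometrically. -/
def SpansL1Asymptotically {X : Type*} [NormedAddCommGroup X] [NormedSpace ℝ X]
    (x : ℕ → X) : Prop :=
  ∃ δ : ℕ → ℝ, (∀ n, 0 ≤ δ n ∧ δ n < 1) ∧ Tendsto δ atTop (nhds 0) ∧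
    ∀ (N : ℕ) (α : ℕ → ℝ),
      (∑ n ∈ Finset.range N, (1 - δ n) * |α n|) ≤ ‖∑ n ∈ Finset.range N, α n • x n‖ ∧
      ‖∑ n ∈ Finset.range N, α n • x n‖ ≤ ∑ n ∈ Finset.range N, |α n|

/-- A sequence spans `ℓ¹` almost isometrically. -/
def SpansL1AlmostIsometrically {X : Type*} [NormedAddCommGroup X] [NormedSpace ℝ X]
    (x : ℕ → X) : Prop :=
  ∃ δ : ℕ → ℝ, (∀ n, 0 ≤ δ n ∧ δ n < 1) ∧ Tendsto δ atTop (nhds 0) ∧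
    ∀ (m M : ℕ) (α : ℕ → ℝ),
      (1 - δ m) * (∑ n ∈ Finset.Icc m M, |α n|) ≤ ‖∑ n ∈ Finset.Icc m M, α n • x n‖ ∧
      ‖∑ n ∈ Finset.Icc m M, α n • x n‖ ≤ ∑ n ∈ Finset.Icc m M, |α n|

/-- A sequence spans `c₀` asymptotically isometrically. -/
def SpansC0Asymptotically {X : Type*} [NormedAddCommGroup X] [NormedSpace ℝ X]
    (z : ℕ → X) : Prop :=
  ∃ δ : ℕ → ℝ, (∀ n, 0 ≤ δ n ∧ δ n < 1) ∧ Tendsto δ atTop (nhds 0) ∧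
    ∀ (N : ℕ) (hN : N ≠ 0) (α : ℕ → ℝ),
      ((Finset.range N).sup' (Finset.nonempty_range_iff.mpr hN)
          (fun n => (1 - δ n) * |α n|)) ≤ ‖∑ n ∈ Finset.range N, α n • z n‖ ∧
      ‖∑ n ∈ Finset.range N, α n • z n‖ ≤
        (Finset.range N).sup' (Finset.nonempty_range_iff.mpr hN)
          (fun n => (1 + δ n) * |α n|)

/-- `P` is an L-projection: an idempotent bounded operator with
`‖ξ‖ = ‖Pξ‖ + ‖ξ - Pξ‖` for all `ξ`. -/
def IsLProjection {E : Type*} [NormedAddCommGroup E] [NormedSpace ℝ E]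
    (P : E →L[ℝ] E) : Prop :=
  (∀ ξ, P (P ξ) = P ξ) ∧ ∀ ξ, ‖ξ‖ = ‖P ξ‖ + ‖ξ - P ξ‖

/-- `X` is L-embedded: the canonical image of `X` in its bidual is the range of an
L-projection. -/
def IsLEmbedded (X : Type*) [NormedAddCommGroup X] [NormedSpace ℝ X] : Prop :=
  ∃ P : StrongDual ℝ (StrongDual ℝ X) →L[ℝ] StrongDual ℝ (StrongDual ℝ X),
    (∀ ξ, P (P ξ) = P ξ) ∧ (∀ ξ, ‖ξ‖ = ‖P ξ‖ + ‖ξ - P ξ‖) ∧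
      Set.range P = Set.range (inclusionInDoubleDual ℝ X)

/-- `X` is M-embedded: the annihilator of `X` in `X'''` is the range of an
L-projection on `X'''`. -/
def IsMEmbedded (X : Type*) [NormedAddCommGroup X] [NormedSpace ℝ X] : Prop :=
  letI : NormedAddCommGroup (StrongDual ℝ (StrongDual ℝ X)) := inferInstance
  letI : NormedSpace ℝ (StrongDual ℝ (StrongDual ℝ X)) := inferInstance
  ∃ P : StrongDual ℝ (StrongDual ℝ (StrongDual ℝ X)) →L[ℝ] StrongDual ℝ (StrongDual ℝ (StrongDual ℝ X)),
    (∀ φ, P (P φ) = P φ) ∧ (∀ φ, ‖φ‖ = ‖P φ‖ + ‖φ - P φ‖) ∧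
      Set.range P = {φ | ∀ x : X, φ (inclusionInDoubleDual ℝ X x) = 0}

/-- `X` fails the fixed point property: there are a nonempty closed bounded convex set and
a contractive self-map without fixed point. -/
def FailsFPP (X : Type*) [NormedAddCommGroup X] [NormedSpace ℝ X] : Prop :=
  ∃ C : Set X, C.Nonempty ∧ IsClosed C ∧ Bornology.IsBounded C ∧ Convex ℝ C ∧
    ∃ f : X → X, Set.MapsTo f C C ∧
      (∀ x ∈ C, ∀ y ∈ C, x ≠ y → ‖f x - f y‖ < ‖x - y‖) ∧
      ∀ x ∈ C, f x ≠ x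

namespace LEmbedded

open Finsupp

variable {X : Type*} [NormedAddCommGroup X] [NormedSpace ℝ X]

theorem exists_strongDual_comp_eq_of_mul_abs_le {E : Type*} [AddCommGroup E] [Module ℝ E]
    (V : E →ₗ[ℝ] X) (L : E →ₗ[ℝ] ℝ) {c : ℝ} (hc : 0 < c) (h : ∀ e, c * |L e| ≤ ‖V e‖) :
    ∃ f : StrongDual ℝ X, ‖f‖ ≤ c⁻¹ ∧ ∀ e, f (V e) = L e := by
  have hker : LinearMap.ker V ≤ LinearMap.ker L := fun e he => by
    have := h e
    rw [LinearMap.mem_ker.1 he, norm_zero] at this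
    exact abs_eq_zero.1 (le_antisymm (nonpos_of_mul_nonpos_right this hc) (abs_nonneg _))
  let L' : LinearMap.range V →ₗ[ℝ] ℝ :=
    (LinearMap.ker V).liftQ L hker ∘ₗ V.quotKerEquivRange.symm.toLinearMap
  have hL' : ∀ e, L' (V.rangeRestrict e) = L e := fun e => by
    have : V.quotKerEquivRange.symm (V.rangeRestrict e) = Submodule.Quotient.mk e :=
      (LinearEquiv.symm_apply_eq _).2 (Subtype.ext (V.quotKerEquivRange_apply_mk e).symm)
    simp [L', this]
  have hbound : ∀ z, ‖L' z‖ ≤ c⁻¹ * ‖z‖ := by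
    rintro ⟨_, e, rfl⟩
    change ‖L' (V.rangeRestrict e)‖ ≤ c⁻¹ * ‖V e‖
    rw [hL', Real.norm_eq_abs, inv_mul_eq_div, le_div_iff₀ hc, mul_comm]
    exact h e
  obtain ⟨f, hf, hfn⟩ := exists_extension_norm_eq _ (L'.mkContinuous c⁻¹ hbound)
  exact ⟨f, hfn ▸ L'.mkContinuous_norm_le (by positivity) hbound,
    fun e => (hf (V.rangeRestrict e)).trans (hL' e)⟩

def HasL1LowerBoundOn {ι : Type*} (c : ℝ) (x : ι → X) (S : Set ι) : Prop :=
  ∀ α ∈ supported ℝ ℝ S, c * (α.sum fun _ a => |a|) ≤ ‖linearCombination ℝ x α‖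

theorem abs_linearCombination_le {ι : Type*} {w : ι → ℝ} (hw : ∀ n, |w n| ≤ 1) (α : ι →₀ ℝ) :
    |linearCombination ℝ w α| ≤ α.sum fun _ a => |a| := by
  rw [linearCombination_apply, Finsupp.sum, Finsupp.sum]
  refine (Finset.abs_sum_le_sum_abs _ _).trans (Finset.sum_le_sum fun n _ => ?_)
  rw [smul_eq_mul, abs_mul]
  exact mul_le_of_le_one_right (abs_nonneg _) (hw n)

theorem HasL1LowerBoundOn.exists_strongDual_apply_eq {ι : Type*} {c : ℝ} {x : ι → X}
    {S : Set ι} (hlow : HasL1LowerBoundOn c x S) (hc : 0 < c) (w : ι → ℝ)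
    (hw : ∀ n, |w n| ≤ 1) : ∃ f : StrongDual ℝ X, ‖f‖ ≤ c⁻¹ ∧ ∀ n ∈ S, f (x n) = w n := by
  obtain ⟨f, hf, hfV⟩ := exists_strongDual_comp_eq_of_mul_abs_le
    (linearCombination ℝ x ∘ₗ (supported ℝ ℝ S).subtype)
    (linearCombination ℝ w ∘ₗ (supported ℝ ℝ S).subtype) hc fun α : supported ℝ ℝ S =>
      (mul_le_mul_of_nonneg_left (abs_linearCombination_le hw α) hc.le).trans (hlow α α.2)
  refine ⟨f, hf, fun n hn => ?_⟩
  simpa using hfV ⟨single n 1, single_mem_supported ℝ 1 hn⟩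

theorem _root_.SpansL1AlmostIsometrically.norm_le_one {x : ℕ → X}
    (h : SpansL1AlmostIsometrically x) (n : ℕ) : ‖x n‖ ≤ 1 := by
  obtain ⟨δ, -, -, hδ⟩ := h
  simpa using (hδ n n fun _ => 1).2

theorem _root_.SpansL1AlmostIsometrically.exists_hasL1LowerBoundOn_Ici {x : ℕ → X}
    (h : SpansL1AlmostIsometrically x) {c : ℝ} (hc : c < 1) :
    ∃ m, HasL1LowerBoundOn c x (Set.Ici m) := by
  obtain ⟨δ, -, hδ0, hδ⟩ := h
  obtain ⟨m, hm⟩ := (hδ0.eventually (gt_mem_nhds (sub_pos.2 hc))).exists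
  refine ⟨m, fun α hα => ?_⟩
  have hsub : α.support ⊆ Finset.Icc m (α.support.sup id) := fun n hn =>
    Finset.mem_Icc.2 ⟨(mem_supported ℝ α).1 hα hn, Finset.le_sup (f := id) hn⟩
  rw [linearCombination_apply, sum_of_support_subset α hsub _ (by simp),
    sum_of_support_subset α hsub _ (by simp)]
  calc c * ∑ n ∈ Finset.Icc m _, |α n|
      ≤ (1 - δ m) * ∑ n ∈ Finset.Icc m _, |α n| := by
        refine mul_le_mul_of_nonneg_right (by linarith) ?_
        exact Finset.sum_nonneg fun n _ => abs_nonneg _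
    _ ≤ _ := (hδ m _ α).1

theorem exists_norm_le_forall_tendsto_apply {ι : Type*} (U : Ultrafilter ι) {x : ι → X}
    {C : ℝ} (hx : ∀ n, ‖x n‖ ≤ C) :
    ∃ ξ : StrongDual ℝ (StrongDual ℝ X), ‖ξ‖ ≤ C ∧
      ∀ f, Tendsto (fun n => f (x n)) U (𝓝 (ξ f)) := by
  obtain ⟨ξ, hξ, hlim⟩ :=
    (WeakDual.isCompact_closedBall (0 : StrongDual ℝ (StrongDual ℝ X)) C).ultrafilter_le_nhds
      (U.map fun n => StrongDual.toWeakDual (inclusionInDoubleDual ℝ X (x n)))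
      (le_principal_iff.2 <| mem_map.2 <| univ_mem' fun n => by
        simpa using (double_dual_bound ℝ X (x n)).trans (hx n))
  exact ⟨WeakDual.toStrongDual ξ, by simpa using hξ,
    fun f => ((WeakDual.eval_continuous f).tendsto ξ).comp hlim⟩

theorem eventually_lt_norm_of_forall_tendsto_apply {ι : Type*} (U : Ultrafilter ι) {z : ι → X}
    {Z : StrongDual ℝ (StrongDual ℝ X)} (hZ : ∀ f, Tendsto (fun n => f (z n)) U (𝓝 (Z f)))
    {c : ℝ} (hc : c < ‖Z‖) : ∀ᶠ n in U, c < ‖z n‖ := by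
  by_contra hne
  have hle : ∀ᶠ n in U, ‖z n‖ ≤ c := by
    simpa only [not_lt] using Ultrafilter.eventually_not.2 hne
  obtain ⟨n, hn⟩ := hle.exists
  refine hc.not_ge (Z.opNorm_le_bound ((norm_nonneg _).trans hn) fun f => ?_)
  refine le_of_tendsto (hZ f).norm (hle.mono fun n hn => ?_)
  calc ‖f (z n)‖ ≤ ‖f‖ * ‖z n‖ := f.le_opNorm _
    _ ≤ c * ‖f‖ := by rw [mul_comm]; gcongr

theorem _root_.IsLEmbedded.exists_projection (hX : IsLEmbedded X) :
    ∃ P : StrongDual ℝ (StrongDual ℝ X) →L[ℝ] StrongDual ℝ (StrongDual ℝ X),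
      (∀ g, P (inclusionInDoubleDual ℝ X g) = inclusionInDoubleDual ℝ X g) ∧
      (∀ ξ, ‖ξ‖ = ‖P ξ‖ + ‖ξ - P ξ‖) ∧ ∀ ξ, ∃ y, P ξ = inclusionInDoubleDual ℝ X y := by
  obtain ⟨P, hPP, hL, hrange⟩ := hX
  refine ⟨P, fun g => ?_, hL, fun ξ => ?_⟩
  · obtain ⟨ξ, hξ⟩ : inclusionInDoubleDual ℝ X g ∈ Set.range P := hrange ▸ ⟨g, rfl⟩
    rw [← hξ, hPP]
  · obtain ⟨y, hy⟩ : P ξ ∈ Set.range (inclusionInDoubleDual ℝ X) := hrange ▸ ⟨ξ, rfl⟩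
    exact ⟨y, hy.symm⟩

theorem norm_inclusionInDoubleDual_add_smul
    {P : StrongDual ℝ (StrongDual ℝ X) →L[ℝ] StrongDual ℝ (StrongDual ℝ X)}
    (hPJ : ∀ g, P (inclusionInDoubleDual ℝ X g) = inclusionInDoubleDual ℝ X g)
    (hL : ∀ ξ, ‖ξ‖ = ‖P ξ‖ + ‖ξ - P ξ‖) {ξ : StrongDual ℝ (StrongDual ℝ X)} {y : X}
    (hy : P ξ = inclusionInDoubleDual ℝ X y) (g : X) (β : ℝ) :
    ‖inclusionInDoubleDual ℝ X g + β • ξ‖ =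
      ‖g + β • y‖ + |β| * ‖ξ - inclusionInDoubleDual ℝ X y‖ := by
  have hP : P (inclusionInDoubleDual ℝ X g + β • ξ) = inclusionInDoubleDual ℝ X (g + β • y) := by
    rw [map_add, map_smul, hPJ, hy, map_add, map_smul]
  have hJ : ∀ z : X, ‖inclusionInDoubleDual ℝ X z‖ = ‖z‖ := (inclusionInDoubleDualLi ℝ).norm_map
  have hQ : inclusionInDoubleDual ℝ X g + β • ξ - inclusionInDoubleDual ℝ X (g + β • y) =
      β • (ξ - inclusionInDoubleDual ℝ X y) := by
    rw [map_add, map_smul]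
    module
  -- instance search does not find `NormSMulClass ℝ` on the bidual by itself
  rw [hL, hP, hJ, hQ, @norm_smul _ _ _ _ _ NormedSpace.toNormSMulClass β
    (ξ - inclusionInDoubleDual ℝ X y), Real.norm_eq_abs]

theorem HasL1LowerBoundOn.mul_le_norm_add_smul {ι : Type*} {l : Filter ι} [l.NeBot]
    (hl : l ≤ cofinite) {x : ι → X} {ξ : StrongDual ℝ (StrongDual ℝ X)}
    (hξ : ∀ f, Tendsto (fun n => f (x n)) l (𝓝 (ξ f)))
    {P : StrongDual ℝ (StrongDual ℝ X) →L[ℝ] StrongDual ℝ (StrongDual ℝ X)}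
    (hPJ : ∀ g, P (inclusionInDoubleDual ℝ X g) = inclusionInDoubleDual ℝ X g)
    (hL : ∀ ξ, ‖ξ‖ = ‖P ξ‖ + ‖ξ - P ξ‖) {y : X} (hy : P ξ = inclusionInDoubleDual ℝ X y)
    {c : ℝ} {S : Set ι} (hlow : HasL1LowerBoundOn c x S) (hc : 0 < c) (hS : S ∈ l)
    {α : ι →₀ ℝ} (hα : α ∈ supported ℝ ℝ S) (β : ℝ) :
    c * ((α.sum fun _ a => |a|) + |β|) ≤
      ‖linearCombination ℝ x α + β • y‖ + |β| * ‖ξ - inclusionInDoubleDual ℝ X y‖ := by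
  classical
  -- `f` follows the signs of `α` on its support and the sign of `β` elsewhere; then
  -- `ξ f = sign β`, so `f` evaluates `∑ αₙ xₙ + β ξ` to `‖α‖₁ + |β|`.
  set w : ι → ℝ := fun n => if n ∈ α.support then SignType.sign (α n) else SignType.sign β
  obtain ⟨f, hf, hfx⟩ := hlow.exists_strongDual_apply_eq hc w fun n => by
    have (a : ℝ) : |(SignType.sign a : ℝ)| ≤ 1 := by
      rcases lt_trichotomy a 0 with h | h | h <;> simp [h]
    simp only [w]
    split_ifs <;> exact this _
  have hξf : ξ f = SignType.sign β := by
    refine tendsto_nhds_unique (hξ f) (tendsto_const_nhds.congr' ?_)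
    filter_upwards [hS, hl α.support.finite_toSet.compl_mem_cofinite] with n hnS hn
    rw [hfx n hnS]
    exact (if_neg hn).symm
  have hfα : f (linearCombination ℝ x α) = α.sum fun _ a => |a| := by
    rw [linearCombination_apply, map_finsuppSum]
    refine Finset.sum_congr rfl fun n hn => ?_
    dsimp only
    rw [map_smul, hfx n ((mem_supported ℝ α).1 hα hn), smul_eq_mul]
    simp only [w, if_pos hn, mul_comm (α n), sign_mul_self]
  set Z := inclusionInDoubleDual ℝ X (linearCombination ℝ x α) + β • ξ
  have hZf : Z f = (α.sum fun _ a => |a|) + |β| := by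
    simp [Z, hfα, hξf, mul_comm β, sign_mul_self]
  calc c * ((α.sum fun _ a => |a|) + |β|) = c * Z f := by rw [hZf]
    _ ≤ c * (‖Z‖ * c⁻¹) := by
        gcongr
        exact (le_abs_self _).trans ((Z.le_opNorm f).trans (by gcongr))
    _ = ‖Z‖ := by field_simp
    _ = _ := norm_inclusionInDoubleDual_add_smul hPJ hL hy _ β

theorem one_le_norm_sub_inclusionInDoubleDual {ι : Type*} {l : Filter ι} [l.NeBot]
    (hl : l ≤ cofinite) {x : ι → X} {ξ : StrongDual ℝ (StrongDual ℝ X)}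
    (hξ : ∀ f, Tendsto (fun n => f (x n)) l (𝓝 (ξ f)))
    {P : StrongDual ℝ (StrongDual ℝ X) →L[ℝ] StrongDual ℝ (StrongDual ℝ X)}
    (hPJ : ∀ g, P (inclusionInDoubleDual ℝ X g) = inclusionInDoubleDual ℝ X g)
    (hL : ∀ ξ, ‖ξ‖ = ‖P ξ‖ + ‖ξ - P ξ‖) {y : X} (hy : P ξ = inclusionInDoubleDual ℝ X y)
    (hlow : ∀ c < 1, ∃ S ∈ l, HasL1LowerBoundOn c x S) :
    1 ≤ ‖ξ - inclusionInDoubleDual ℝ X y‖ := by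
  -- If `s < 1`, the estimate above extends `xₙ ↦ 1` (`n ∈ S`), `y ↦ 0` to a functional of norm
  -- `< 1 / s`, on which `ξ - y` takes the value `1`.
  set s := ‖ξ - inclusionInDoubleDual ℝ X y‖
  by_contra! hs
  obtain ⟨S, hS, hlowS⟩ := hlow ((1 + s) / 2) (by linarith)
  have hc : 0 < (1 + s) / 2 := by positivity
  obtain ⟨f, hf, hfV⟩ := exists_strongDual_comp_eq_of_mul_abs_le
    ((linearCombination ℝ x ∘ₗ (supported ℝ ℝ S).subtype).coprod
      (LinearMap.toSpanSingleton ℝ X y))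
    ((linearCombination ℝ (fun _ => (1 : ℝ)) ∘ₗ (supported ℝ ℝ S).subtype).coprod
      (0 : ℝ →ₗ[ℝ] ℝ)) hc
    fun (⟨α, β⟩ : supported ℝ ℝ S × ℝ) => by
      have hαβ := hlowS.mul_le_norm_add_smul hl hξ hPJ hL hy hc hS α.2 β
      have hα := abs_linearCombination_le (w := fun _ => (1 : ℝ)) (by simp) α.1
      simp only [LinearMap.coprod_apply, LinearMap.comp_apply, Submodule.subtype_apply,
        LinearMap.toSpanSingleton_apply, LinearMap.zero_apply, add_zero]
      nlinarith [abs_nonneg β]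
  have hfx : ∀ n ∈ S, f (x n) = 1 := fun n hn => by
    simpa using hfV (⟨single n 1, single_mem_supported ℝ 1 hn⟩, 0)
  have hfy : f y = 0 := by simpa using hfV (0, 1)
  have hξf : ξ f = 1 := tendsto_nhds_unique (hξ f)
    (tendsto_const_nhds.congr' (eventually_of_mem hS fun n hn => (hfx n hn).symm))
  have : 1 ≤ s * ((1 + s) / 2)⁻¹ :=
    calc 1 = (ξ - inclusionInDoubleDual ℝ X y) f := by simp [hξf, hfy]
      _ ≤ s * ‖f‖ := (le_abs_self _).trans ((ξ - inclusionInDoubleDual ℝ X y).le_opNorm f)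
      _ ≤ s * ((1 + s) / 2)⁻¹ := by gcongr
  rw [← div_eq_mul_inv, one_le_div hc] at this
  linarith

theorem eventually_lt_norm_add_smul {ι : Type*} (U : Ultrafilter ι) {x : ι → X}
    {ξ : StrongDual ℝ (StrongDual ℝ X)} (hξ : ∀ f, Tendsto (fun n => f (x n)) U (𝓝 (ξ f)))
    {P : StrongDual ℝ (StrongDual ℝ X) →L[ℝ] StrongDual ℝ (StrongDual ℝ X)}
    (hPJ : ∀ g, P (inclusionInDoubleDual ℝ X g) = inclusionInDoubleDual ℝ X g)
    (hL : ∀ ξ, ‖ξ‖ = ‖P ξ‖ + ‖ξ - P ξ‖) (hPξ : P ξ = 0) (hξ1 : 1 ≤ ‖ξ‖)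
    (w : X) (t : ℝ) {c : ℝ} (hc : c < ‖w‖ + |t|) : ∀ᶠ n in U, c < ‖w + t • x n‖ := by
  refine eventually_lt_norm_of_forall_tendsto_apply U
    (Z := inclusionInDoubleDual ℝ X w + t • ξ) (fun f => ?_) ?_
  · simpa using (tendsto_const_nhds (x := f w)).add ((hξ f).const_mul t)
  · rw [norm_inclusionInDoubleDual_add_smul hPJ hL (y := 0) (by rw [hPξ, map_zero]), smul_zero,
      add_zero, map_zero, congrArg norm (sub_zero ξ)]
    nlinarith [abs_nonneg t]

theorem _root_.IsCompact.eventually_forall_lt_of_lipschitzWith {ι Y : Type*}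
    [PseudoMetricSpace Y] {K : Set Y} (hK : IsCompact K) {l : Filter ι} {g : ι → Y → ℝ}
    {L : NNReal} (hg : ∀ n, LipschitzWith L (g n)) {a b : ℝ} (hab : a < b)
    (h : ∀ y ∈ K, ∀ᶠ n in l, b < g n y) : ∀ᶠ n in l, ∀ y ∈ K, a < g n y := by
  refine hK.induction_on (p := fun s => ∀ᶠ n in l, ∀ y ∈ s, a < g n y)
    (Eventually.of_forall fun n y hy => hy.elim)
    (fun s t hst ht => ht.mono fun n hn y hy => hn y (hst hy))
    (fun s t hs ht => (hs.and ht).mono fun n hn y hy => hy.elim (hn.1 y) (hn.2 y))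
    fun y hy => ?_
  have hr : 0 < (b - a) / (L + 1) := div_pos (by linarith) (by positivity)
  refine ⟨Metric.ball y ((b - a) / (L + 1)),
    mem_nhdsWithin_of_mem_nhds (Metric.ball_mem_nhds y hr), (h y hy).mono fun n hn z hz => ?_⟩
  have hdist : dist (g n z) (g n y) ≤ L * dist z y := (hg n).dist_le_mul z y
  have hL : (L : ℝ) * dist z y ≤ (L + 1) * ((b - a) / (L + 1)) := by
    gcongr
    · linarith
    · exact (Metric.mem_ball.1 hz).le
  rw [mul_div_cancel₀ _ (by positivity)] at hL
  linarith [neg_abs_le (g n z - g n y), Real.dist_eq (g n z) (g n y)]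

theorem eventually_forall_mem_mul_le_norm_add_smul {ι : Type*} {l : Filter ι} {x : ι → X}
    (hx : ∀ n, ‖x n‖ ≤ 1)
    (h : ∀ (w : X) (t c : ℝ), c < ‖w‖ + |t| → ∀ᶠ n in l, c < ‖w + t • x n‖)
    (W : Submodule ℝ X) [FiniteDimensional ℝ W] {c : ℝ} (hc : c < 1) :
    ∀ᶠ n in l, ∀ w ∈ W, ∀ t : ℝ, c * (‖w‖ + |t|) ≤ ‖w + t • x n‖ := by
  -- By homogeneity it suffices to work on the unit sphere `K` of `W ⊕₁ ℝ`, which is compact.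
  set K : Set (W × ℝ) := {p | ‖p.1‖ + |p.2| = 1}
  have hK : IsCompact K := by
    refine Metric.isCompact_of_isClosed_isBounded (isClosed_eq (by fun_prop) continuous_const)
      ((Metric.isBounded_closedBall (x := 0) (r := 1)).subset fun p hp => ?_)
    rw [mem_closedBall_zero_iff, Prod.norm_def, Real.norm_eq_abs, ← hp]
    exact max_le (le_add_of_nonneg_right (abs_nonneg _)) (le_add_of_nonneg_left (norm_nonneg _))
  have hlip : ∀ n, LipschitzWith 2 fun p : W × ℝ => ‖(p.1 : X) + p.2 • x n‖ := by
    refine fun n => LipschitzWith.of_dist_le_mul fun p q => ?_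
    have hsub : (p.1 : X) + p.2 • x n - ((q.1 : X) + q.2 • x n) =
        ((p.1 - q.1 : W) : X) + (p.2 - q.2) • x n := by
      rw [Submodule.coe_sub]
      module
    calc dist ‖(p.1 : X) + p.2 • x n‖ ‖(q.1 : X) + q.2 • x n‖
        ≤ ‖((p.1 - q.1 : W) : X) + (p.2 - q.2) • x n‖ := hsub ▸ dist_norm_norm_le _ _
      _ ≤ dist p.1 q.1 + dist p.2 q.2 := by
          refine (norm_add_le _ _).trans (add_le_add (dist_eq_norm _ _).ge ?_)
          rw [norm_smul, Real.dist_eq, Real.norm_eq_abs]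
          exact mul_le_of_le_one_right (abs_nonneg _) (hx n)
      _ ≤ 2 * dist p q := by
          rw [two_mul, Prod.dist_eq]
          exact add_le_add (le_max_left _ _) (le_max_right _ _)
  have hK_lt := hK.eventually_forall_lt_of_lipschitzWith hlip (a := c) (b := (c + 1) / 2)
    (by linarith) fun p hp => h p.1 p.2 _ (by rw [← Submodule.coe_norm, hp]; linarith)
  filter_upwards [hK_lt] with n hn w hw t
  rcases (add_nonneg (norm_nonneg w) (abs_nonneg t)).eq_or_lt with hs | hs
  · rw [← hs, mul_zero]
    exact norm_nonneg _
  set s := ‖w‖ + |t|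
  have hmem : (s⁻¹ • (⟨w, hw⟩ : W), s⁻¹ * t) ∈ K := by
    rw [Set.mem_ofPred_eq, norm_smul, Real.norm_eq_abs, abs_mul, abs_inv, abs_of_pos hs,
      ← mul_add]
    exact inv_mul_cancel₀ hs.ne'
  have := hn _ hmem
  simp only [Submodule.coe_smul, mul_smul, ← smul_add, norm_smul, Real.norm_eq_abs, abs_inv,
    abs_of_pos hs] at this
  rw [inv_mul_eq_div, lt_div_iff₀ hs] at this
  exact this.le

theorem exists_ge_forall_mem_span_mul_le {l : Filter ℕ} [l.NeBot] (hl : l ≤ atTop)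
    {x : ℕ → X} (hx : ∀ n, ‖x n‖ ≤ 1)
    (h : ∀ (w : X) (t c : ℝ), c < ‖w‖ + |t| → ∀ᶠ n in l, c < ‖w + t • x n‖)
    {a b : ℝ} (hb : 0 < b) (hab : a < b) (M : ℕ) :
    ∃ n, M ≤ n ∧ ∀ w ∈ Submodule.span ℝ (x '' Set.Iio M), ∀ t : ℝ,
      a * (‖w‖ + |t|) ≤ b * ‖w + t • x n‖ := by
  have := FiniteDimensional.span_of_finite ℝ ((Set.finite_Iio M).image x)
  obtain ⟨n, hn, hMn⟩ := ((eventually_forall_mem_mul_le_norm_add_smul hx h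
    (Submodule.span ℝ (x '' Set.Iio M)) ((div_lt_one hb).2 hab)).and
    (hl (eventually_ge_atTop M))).exists
  refine ⟨n, hMn, fun w hw t => ?_⟩
  simpa only [div_mul_eq_mul_div, div_le_iff₀' hb] using hn w hw t

theorem exists_strictMono_forall_lt_and {P : ℕ → ℕ → ℕ → Prop}
    (h : ∀ j M, ∃ n, M ≤ n ∧ P j M n) :
    ∃ k M : ℕ → ℕ, StrictMono k ∧ (∀ i j, i < j → k i < M j) ∧ ∀ j, P j (M j) (k j) := by
  choose g hg hgP using h
  let M : ℕ → ℕ := fun j => Nat.rec 0 (fun j Mj => g j Mj + 1) j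
  have hM : ∀ j, M (j + 1) = g j (M j) + 1 := fun j => rfl
  have hMmono : Monotone M := monotone_nat_of_le_succ fun j => by
    rw [hM]
    linarith [hg j (M j)]
  have hlt : ∀ i j, i < j → g i (M i) < M j := fun i j hij => by
    have := hMmono (Nat.succ_le_of_lt hij)
    rw [hM] at this
    omega
  exact ⟨fun j => g j (M j), M, fun i j hij => (hlt i j hij).trans_le (hg j (M j)), hlt,
    fun j => hgP j (M j)⟩

theorem sum_mul_abs_le_mul_norm_sum {y : ℕ → X} {r α : ℕ → ℝ}
    (h : ∀ j, r j * (‖∑ i ∈ Finset.range j, α i • y i‖ + |α j|) ≤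
      r (j + 1) * ‖∑ i ∈ Finset.range (j + 1), α i • y i‖) (N : ℕ) :
    ∑ i ∈ Finset.range N, r i * |α i| ≤ r N * ‖∑ i ∈ Finset.range N, α i • y i‖ := by
  induction N with
  | zero => simp
  | succ N ih =>
    rw [Finset.sum_range_succ]
    linarith [h N, mul_add (r N) ‖∑ i ∈ Finset.range N, α i • y i‖ |α N|]

theorem spansL1Asymptotically_of_forall_mem_span {y : ℕ → X} (hy : ∀ n, ‖y n‖ ≤ 1)
    {δ : ℕ → ℝ} (hδ : ∀ n, 0 ≤ δ n ∧ δ n < 1) (hδ0 : Tendsto δ atTop (𝓝 0))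
    (h : ∀ j, ∀ w ∈ Submodule.span ℝ (y '' Set.Iio j), ∀ t : ℝ,
      (1 - δ j) * (‖w‖ + |t|) ≤ (1 - δ (j + 1)) * ‖w + t • y j‖) :
    SpansL1Asymptotically y := by
  refine ⟨δ, hδ, hδ0, fun N α => ⟨?_, ?_⟩⟩
  · refine (sum_mul_abs_le_mul_norm_sum (fun j => ?_) N).trans
      (mul_le_of_le_one_left (norm_nonneg _) (by linarith [hδ N]))
    rw [Finset.sum_range_succ]
    refine h j _ (Submodule.sum_mem _ fun i hi => Submodule.smul_mem _ _ ?_) _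
    exact Submodule.subset_span ⟨i, Finset.mem_range.1 hi, rfl⟩
  · refine (norm_sum_le _ _).trans (Finset.sum_le_sum fun n _ => ?_)
    rw [norm_smul, Real.norm_eq_abs]
    exact mul_le_of_le_one_right (abs_nonneg _) (hy n)

end LEmbedded

open LEmbedded in
theorem stmt6_general {X : Type*} [NormedAddCommGroup X] [NormedSpace ℝ X] (hX : IsLEmbedded X)
    (x : ℕ → X) (h : SpansL1AlmostIsometrically x) :
    ∃ k : ℕ → ℕ, StrictMono k ∧ SpansL1Asymptotically (x ∘ k) := by
  obtain ⟨P, hPJ, hL, hPrange⟩ := hX.exists_projection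
  set U := Ultrafilter.of (atTop : Filter ℕ)
  have hU : (U : Filter ℕ) ≤ atTop := Ultrafilter.of_le _
  obtain ⟨ξ, hξ1, hξ⟩ := exists_norm_le_forall_tendsto_apply U h.norm_le_one
  obtain ⟨y, hy⟩ := hPrange ξ
  have hsing : 1 ≤ ‖ξ - P ξ‖ := hy ▸ one_le_norm_sub_inclusionInDoubleDual
    (hU.trans_eq Nat.cofinite_eq_atTop.symm) hξ hPJ hL hy fun c hc => by
      obtain ⟨m, hm⟩ := h.exists_hasL1LowerBoundOn_Ici hc
      exact ⟨_, hU (Ici_mem_atTop m), hm⟩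
  have hPξ : P ξ = 0 := (P ξ).opNorm_zero_iff.1 (by linarith [hL ξ, norm_nonneg (P ξ)])
  have hcore := eventually_lt_norm_add_smul U hξ hPJ hL hPξ
    (by linarith [hL ξ, norm_nonneg (P ξ)])
  obtain ⟨δ, hδanti, hδ01, hδ0⟩ := exists_seq_strictAnti_tendsto' (zero_lt_one' ℝ)
  obtain ⟨k, M, hk, hkM, hkP⟩ := exists_strictMono_forall_lt_and fun j =>
    exists_ge_forall_mem_span_mul_le hU h.norm_le_one hcore (sub_pos.2 (hδ01 (j + 1)).2)
      (sub_lt_sub_left (hδanti j.lt_succ_self) 1)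
  refine ⟨k, hk, spansL1Asymptotically_of_forall_mem_span (fun n => h.norm_le_one _)
    (fun n => ⟨(hδ01 n).1.le, (hδ01 n).2⟩) hδ0
    fun j w hw t => hkP j w (Submodule.span_mono ?_ hw) t⟩
  rintro _ ⟨i, hi, rfl⟩
  exact ⟨k i, hkM i j hi, rfl⟩

theorem stmt6 {X : Type*} [NormedAddCommGroup X] [NormedSpace ℝ X] [CompleteSpace X] (hX : IsLEmbedded X)
    (x : ℕ → X) (h : SpansL1AlmostIsometrically x) :
    ∃ k : ℕ → ℕ, StrictMono k ∧ SpansL1Asymptotically (x ∘ k) :=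
  stmt6_general hX x h
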